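/- In the setting of a general filtration {Q_n} on a compact doubling metric space, the correlation dimension of a finite Borel regular measure μ on E satisfies the upper bound dim_cor(μ) ≤ liminf_{n→∞} log(∑_{Q∈Q_n} μ(Q)²)/log δ_n, because ∫ μ(B(x, 2γ_n)) dμ(x) ≥ ∑_{Q∈Q_n} μ(Q)². -/

import Mathlib

open MeasureTheory Filter Metric Set Topology
open scoped ENNReal

/-- The lower local dimension of a measure at a point. -/
noncomputable def lowerLocalDim {X : Type*} [MetricSpace X] [MeasurableSpace X]
    (μ : Measure X) (x : X) : ℝ :=
  liminf (fun r : ℝ => Real.log (μ (closedBall x r)).toReal / Real.log r) (𝓝[>] 0)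

/-- The upper local dimension of a measure at a point. -/
noncomputable def upperLocalDim {X : Type*} [MetricSpace X] [MeasurableSpace X]
    (μ : Measure X) (x : X) : ℝ :=
  limsup (fun r : ℝ => Real.log (μ (closedBall x r)).toReal / Real.log r) (𝓝[>] 0)

/-- The `s`-potential of `μ` at `x`. -/
noncomputable def potential {X : Type*} [MetricSpace X] [MeasurableSpace X]
    (μ : Measure X) (s : ℝ) (x : X) : ℝ≥0∞ :=
  ∫⁻ y, edist x y ^ (-s) ∂μ

/-- The `s`-energy of `μ`. -/
noncomputable def energy {X : Type*} [MetricSpace X] [MeasurableSpace X]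
    (μ : Measure X) (s : ℝ) : ℝ≥0∞ :=
  ∫⁻ x, ∫⁻ y, edist x y ^ (-s) ∂μ ∂μ

/-- The correlation dimension of `μ`: `sup { s : I_s(μ) < ∞ }`. -/
noncomputable def corrDim {X : Type*} [MetricSpace X] [MeasurableSpace X]
    (μ : Measure X) : ℝ :=
  sSup {s : ℝ | energy μ s < ⊤}

/-- The lower Hausdorff dimension of `μ`: the `μ`-essential infimum of the
lower local dimension. -/
noncomputable def lowerHausdorffDim {X : Type*} [MetricSpace X] [MeasurableSpace X]
    (μ : Measure X) : ℝ :=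
  essInf (fun x => lowerLocalDim μ x) μ

/-- A metric space is doubling if there is `N` such that every closed ball can be
covered by `N` closed balls of half the radius. -/
def DoublingSpace (X : Type*) [MetricSpace X] : Prop :=
  ∃ N : ℕ, ∀ (x : X) (r : ℝ), ∃ t : Finset X, t.card ≤ N ∧
    closedBall x r ⊆ ⋃ y ∈ t, closedBall y (r / 2)

/-!
Each `Q ∈ Qₙ` lies in `B(x, 2γₙ)` for every `x ∈ Q`, so integrating `μ(B(x, 2γₙ))` over the
disjoint pieces gives `∑ μ(Q)² ≤ ∫ μ(B(x, 2γₙ)) dμ`. If the `s`-energy `I` of `μ` is finite, then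
`μ(B(x, r)) ≤ r ^ s φ_s(x)`, hence `∑ μ(Q)² ≤ (2γₙ) ^ s I`; dividing logarithms by `log δₙ < 0` and
using `log γₙ / log δₙ → 1` yields `s ≤ liminf`. That liminf is taken over a sequence bounded above:
in a compact doubling space the disjoint pieces containing `δₙ`-balls number at most `C δₙ ^ (-D)`,
so `∑ μ(Q)² ≥ μ(X)² / (#Qₙ)² ≥ c δₙ ^ (2D)`.
-/

section Packing

variable {X : Type*} [MetricSpace X]

lemma exists_finset_card_le_pow_closedBall_subset {N : ℕ}
    (hN : ∀ (x : X) (r : ℝ), ∃ t : Finset X, t.card ≤ N ∧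
      closedBall x r ⊆ ⋃ y ∈ t, closedBall y (r / 2)) (x : X) (R : ℝ) (k : ℕ) :
    ∃ t : Finset X, t.card ≤ N ^ k ∧ closedBall x R ⊆ ⋃ y ∈ t, closedBall y (R / 2 ^ k) := by
  induction k with
  | zero => exact ⟨{x}, by simp, by simp⟩
  | succ k ih =>
    classical
    obtain ⟨t, hcard, hcover⟩ := ih
    choose u hu hucover using fun y : X => hN y (R / 2 ^ k)
    refine ⟨t.biUnion u, ?_, fun z hz => ?_⟩
    · calc (t.biUnion u).card ≤ ∑ y ∈ t, (u y).card := Finset.card_biUnion_le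
        _ ≤ t.card * N := Finset.sum_le_card_nsmul _ _ _ fun y _ => hu y
        _ ≤ N ^ k * N := Nat.mul_le_mul_right _ hcard
        _ = N ^ (k + 1) := (pow_succ N k).symm
    · obtain ⟨y, hyt, hzy⟩ := mem_iUnion₂.1 (hcover hz)
      obtain ⟨w, hwy, hzw⟩ := mem_iUnion₂.1 (hucover y hzy)
      rw [pow_succ, ← div_div]
      exact mem_iUnion₂.2 ⟨w, Finset.mem_biUnion.2 ⟨y, hyt, hwy⟩, hzw⟩

lemma finite_and_ncard_le_of_pairwise_lt_dist {S : Set X} {ε r : ℝ} {t : Finset X}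
    (hsep : S.Pairwise fun a b => ε < dist a b) (hcover : S ⊆ ⋃ y ∈ t, closedBall y r)
    (hr : 2 * r ≤ ε) : S.Finite ∧ S.ncard ≤ t.card := by
  have hcover' : ∀ z ∈ S, ∃ y ∈ t, z ∈ closedBall y r := fun z hz => by simpa using hcover hz
  choose! c hct hcd using hcover'
  have hinj : S.InjOn c := by
    intro a ha b hb hab
    by_contra hne
    have hab' : dist a b ≤ 2 * r := by
      calc dist a b ≤ dist a (c a) + dist b (c b) := by
            rw [hab]; exact dist_triangle_right _ _ _
        _ ≤ r + r := add_le_add (hcd a ha) (hcd b hb)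
        _ = 2 * r := by ring
    linarith [hsep ha hb hne]
  have himage : c '' S ⊆ t := by
    rintro _ ⟨a, ha, rfl⟩
    exact hct a ha
  refine ⟨(t.finite_toSet.subset himage).of_finite_image hinj, ?_⟩
  calc S.ncard = (c '' S).ncard := (hinj.ncard_image).symm
    _ ≤ (t : Set X).ncard := Set.ncard_le_ncard himage t.finite_toSet
    _ = t.card := Set.ncard_coe_finset t

lemma DoublingSpace.exists_ncard_le_rpow_of_pairwise_lt_dist [CompactSpace X]
    (hX : DoublingSpace X) :
    ∃ C D : ℝ, 0 < C ∧ ∀ δ : ℝ, 0 < δ → δ ≤ 1 → ∀ S : Set X,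
      S.Pairwise (fun a b => δ < dist a b) → S.Finite ∧ (S.ncard : ℝ) ≤ C * δ ^ (-D) := by
  obtain ⟨N, hN⟩ := hX
  rcases isEmpty_or_nonempty X with hempty | ⟨⟨x₀⟩⟩
  · refine ⟨1, 0, one_pos, fun δ _ _ S _ => ?_⟩
    simp [Set.eq_empty_of_isEmpty S]
  obtain ⟨R', hR'⟩ := isCompact_univ.isBounded.subset_closedBall x₀
  set R := max R' 1
  set D := Real.logb 2 (max N 1)
  refine ⟨(4 * R) ^ D, D, by positivity, fun δ hδ hδ1 S hsep => ?_⟩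
  -- `k + 1` halvings bring `R` down to at most `δ / 2`, while `2 ^ (k + 1) ≤ 4R/δ`.
  obtain ⟨k, hk_le, hk_lt⟩ := exists_nat_pow_near (x := 2 * R / δ) (y := 2)
    ((one_le_div hδ).2 (by linarith [le_max_right R' 1])) one_lt_two
  obtain ⟨t, htcard, htcover⟩ :=
    exists_finset_card_le_pow_closedBall_subset hN x₀ R (k + 1)
  have hr : 2 * (R / 2 ^ (k + 1)) ≤ δ := by
    rw [div_lt_iff₀ hδ] at hk_lt
    rw [← mul_div_assoc, div_le_iff₀ (by positivity)]
    linarith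
  obtain ⟨hfin, hcard⟩ := finite_and_ncard_le_of_pairwise_lt_dist hsep
    ((subset_univ S).trans (hR'.trans (closedBall_subset_closedBall (le_max_left R' 1)))
      |>.trans htcover) hr
  refine ⟨hfin, ?_⟩
  have hpow : ((max N 1 : ℕ) : ℝ) ^ (k + 1) = ((2 : ℝ) ^ (k + 1)) ^ D := by
    rw [← Real.rpow_natCast_mul zero_le_two, mul_comm, Real.rpow_mul zero_le_two,
      Real.rpow_logb two_pos (by norm_num) (by positivity), Real.rpow_natCast]
    push_cast
    rfl
  calc (S.ncard : ℝ) ≤ ((max N 1 : ℕ) : ℝ) ^ (k + 1) := by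
        exact_mod_cast hcard.trans (htcard.trans (Nat.pow_le_pow_left (le_max_left N 1) _))
    _ = ((2 : ℝ) ^ (k + 1)) ^ D := hpow
    _ ≤ (4 * R / δ) ^ D := by
        gcongr
        · exact Real.logb_nonneg one_lt_two (by exact_mod_cast le_max_right N 1)
        · rw [pow_succ, show 4 * R / δ = 2 * R / δ * 2 by ring]
          gcongr
    _ = (4 * R) ^ D * δ ^ (-D) := by
        rw [Real.div_rpow (by positivity) hδ.le, Real.rpow_neg hδ.le, div_eq_mul_inv]

lemma pairwise_lt_dist_image_of_closedBall_subset {𝒬 : Set (Set X)} {δ : ℝ} {c : Set X → X}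
    (hdisj : 𝒬.PairwiseDisjoint id) (hc : ∀ Q ∈ 𝒬, closedBall (c Q) δ ⊆ Q) :
    (c '' 𝒬).Pairwise fun a b => δ < dist a b := by
  rintro _ ⟨Q, hQ, rfl⟩ _ ⟨Q', hQ', rfl⟩ hne
  by_contra! hle
  have hQQ' : Q ≠ Q' := fun h => hne (by rw [h])
  exact Set.disjoint_left.1 (hdisj hQ hQ' hQQ')
    (hc Q hQ (show c Q' ∈ closedBall (c Q) δ by rwa [mem_closedBall, dist_comm]))
    (hc Q' hQ' (mem_closedBall_self (dist_nonneg.trans hle)))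

lemma DoublingSpace.exists_ncard_le_rpow_of_pairwiseDisjoint [CompactSpace X]
    (hX : DoublingSpace X) :
    ∃ C D : ℝ, 0 < C ∧ ∀ δ : ℝ, 0 < δ → δ ≤ 1 → ∀ 𝒬 : Set (Set X), 𝒬.PairwiseDisjoint id →
      (∀ Q ∈ 𝒬, ∃ x, closedBall x δ ⊆ Q) → 𝒬.Finite ∧ (𝒬.ncard : ℝ) ≤ C * δ ^ (-D) := by
  obtain ⟨C, D, hC, hpack⟩ := hX.exists_ncard_le_rpow_of_pairwise_lt_dist
  refine ⟨C, D, hC, fun δ hδ hδ1 𝒬 hdisj hball => ?_⟩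
  rcases 𝒬.eq_empty_or_nonempty with rfl | ⟨Q, hQ⟩
  · simpa using by positivity
  have : Nonempty X := ⟨(hball Q hQ).choose⟩
  choose! c hc using hball
  have hsep := pairwise_lt_dist_image_of_closedBall_subset hdisj hc
  have hinj : 𝒬.InjOn c := fun Q hQ Q' hQ' hcc =>
    hdisj.elim hQ hQ' <| Set.not_disjoint_iff.2
      ⟨c Q, hc Q hQ (mem_closedBall_self hδ.le), hcc ▸ hc Q' hQ' (mem_closedBall_self hδ.le)⟩
  obtain ⟨hfin, hcard⟩ := hpack δ hδ hδ1 _ hsep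
  exact ⟨hfin.of_finite_image hinj, hinj.ncard_image ▸ hcard⟩

end Packing

lemma log_lower_bound_of_sq_le {m q x C D δ : ℝ} (hm : 0 < m) (hq : 0 ≤ q)
    (hC : 0 < C) (hδ : 0 < δ) (hqC : q ≤ C * δ ^ (-D)) (h : m ^ 2 ≤ q ^ 2 * x) :
    0 < x ∧ 2 * Real.log (m / C) + 2 * D * Real.log δ ≤ Real.log x := by
  have hqx : 0 < q ^ 2 * x := (pow_pos hm 2).trans_le h
  have hx₀ : 0 < x := pos_of_mul_pos_right hqx (by positivity)
  have hq₀ : 0 < q := hq.lt_of_ne (by rintro rfl; simp at hqx)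
  refine ⟨hx₀, ?_⟩
  have hlog := Real.log_le_log (by positivity) h
  have hlogq := Real.log_le_log hq₀ hqC
  rw [Real.log_mul (by positivity) hx₀.ne', Real.log_pow, Real.log_pow] at hlog
  rw [Real.log_mul hC.ne' (by positivity), Real.log_rpow hδ] at hlogq
  rw [Real.log_div hm.ne' hC.ne']
  push_cast at hlog
  nlinarith

section Pigeonhole

variable {α : Type*} [MeasurableSpace α] {μ : Measure α}

lemma exists_measure_sUnion_le_ncard_mul {𝒬 : Set (Set α)} (h𝒬 : 𝒬.Finite)
    (hpos : μ (⋃₀ 𝒬) ≠ 0) : ∃ Q ∈ 𝒬, μ (⋃₀ 𝒬) ≤ 𝒬.ncard * μ Q := by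
  have hne : h𝒬.toFinset.Nonempty := by
    by_contra! h
    simp_all
  obtain ⟨Q, hQ, hmax⟩ := h𝒬.toFinset.exists_max_image μ hne
  refine ⟨Q, h𝒬.mem_toFinset.1 hQ, ?_⟩
  calc μ (⋃₀ 𝒬) = μ (⋃ Q ∈ h𝒬.toFinset, Q) := by simp [sUnion_eq_biUnion]
    _ ≤ ∑ Q ∈ h𝒬.toFinset, μ Q := measure_biUnion_finset_le _ _
    _ ≤ h𝒬.toFinset.card • μ Q := Finset.sum_le_card_nsmul _ _ _ hmax
    _ = 𝒬.ncard * μ Q := by rw [nsmul_eq_mul, ncard_eq_toFinset_card 𝒬 h𝒬]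

lemma measure_sUnion_sq_le_ncard_sq_mul_tsum {𝒬 : Set (Set α)} (h𝒬 : 𝒬.Finite) :
    μ (⋃₀ 𝒬) ^ 2 ≤ (𝒬.ncard : ℝ≥0∞) ^ 2 * ∑' Q : 𝒬, μ Q ^ 2 := by
  rcases eq_or_ne (μ (⋃₀ 𝒬)) 0 with h0 | hpos
  · simp [h0]
  obtain ⟨Q, hQ, hle⟩ := exists_measure_sUnion_le_ncard_mul h𝒬 hpos
  calc μ (⋃₀ 𝒬) ^ 2 ≤ (𝒬.ncard * μ Q) ^ 2 := by gcongr
    _ = (𝒬.ncard : ℝ≥0∞) ^ 2 * μ Q ^ 2 := mul_pow _ _ _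
    _ ≤ (𝒬.ncard : ℝ≥0∞) ^ 2 * ∑' Q : 𝒬, μ Q ^ 2 := by
        gcongr
        exact ENNReal.le_tsum (f := fun Q : 𝒬 => μ Q ^ 2) ⟨Q, hQ⟩

lemma log_tsum_measure_sq_lower_bound [IsFiniteMeasure μ] [NeZero μ] {𝒬 : Set (Set α)}
    {C D δ : ℝ} (h𝒬 : 𝒬.Finite) (hcover : μ univ ≤ μ (⋃₀ 𝒬)) (hS : ∑' Q : 𝒬, μ Q ^ 2 ≠ ⊤)
    (hC : 0 < C) (hδ : 0 < δ) (hcard : (𝒬.ncard : ℝ) ≤ C * δ ^ (-D)) :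
    0 < (∑' Q : 𝒬, μ Q ^ 2).toReal ∧ 2 * Real.log ((μ univ).toReal / C) + 2 * D * Real.log δ ≤
      Real.log (∑' Q : 𝒬, μ Q ^ 2).toReal := by
  have h := (pow_le_pow_left' hcover 2).trans (measure_sUnion_sq_le_ncard_sq_mul_tsum h𝒬)
  refine log_lower_bound_of_sq_le (ENNReal.toReal_pos (NeZero.ne _) (measure_ne_top _ _))
    (Nat.cast_nonneg _) hC hδ hcard ?_
  simpa [ENNReal.toReal_mul] using ENNReal.toReal_mono (ENNReal.mul_ne_top (by simp) hS) h

end Pigeonhole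

section MetricMeasure

variable {X : Type*} [MetricSpace X] [MeasurableSpace X] {μ : Measure X}

lemma measure_sq_le_setLIntegral_measure_closedBall {Q : Set X} {c : X} {γ : ℝ}
    (hQ : MeasurableSet Q) (hQc : Q ⊆ closedBall c γ) :
    μ Q ^ 2 ≤ ∫⁻ x in Q, μ (closedBall x (2 * γ)) ∂μ := by
  have hQ_sub : ∀ x ∈ Q, Q ⊆ closedBall x (2 * γ) := fun x hx y hy => by
    rw [mem_closedBall, two_mul]
    exact dist_triangle_right y x c |>.trans (add_le_add (hQc hy) (hQc hx))
  calc μ Q ^ 2 = ∫⁻ _ in Q, μ Q ∂μ := by rw [setLIntegral_const, sq]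
    _ ≤ ∫⁻ x in Q, μ (closedBall x (2 * γ)) ∂μ :=
        setLIntegral_mono' hQ fun x hx => measure_mono (hQ_sub x hx)

lemma tsum_measure_sq_le_lintegral_measure_closedBall {𝒬 : Set (Set X)} {γ : ℝ}
    (hdisj : 𝒬.PairwiseDisjoint id) (hmeas : ∀ Q ∈ 𝒬, MeasurableSet Q)
    (hsub : ∀ Q ∈ 𝒬, ∃ c, Q ⊆ closedBall c γ) :
    ∑' Q : 𝒬, μ Q ^ 2 ≤ ∫⁻ x, μ (closedBall x (2 * γ)) ∂μ := by
  rw [ENNReal.tsum_eq_iSup_sum]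
  refine iSup_le fun t => ?_
  have ht : (t : Set 𝒬).PairwiseDisjoint fun Q => (Q : Set X) :=
    fun Q _ Q' _ hne => hdisj Q.2 Q'.2 (Subtype.coe_ne_coe.2 hne)
  calc ∑ Q ∈ t, μ Q ^ 2 ≤ ∑ Q ∈ t, ∫⁻ x in (Q : Set X), μ (closedBall x (2 * γ)) ∂μ :=
        Finset.sum_le_sum fun Q _ =>
          measure_sq_le_setLIntegral_measure_closedBall (hmeas Q Q.2) (hsub Q Q.2).choose_spec
    _ = ∫⁻ x in ⋃ Q ∈ t, (Q : Set X), μ (closedBall x (2 * γ)) ∂μ :=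
        (lintegral_biUnion_finset ht (fun Q _ => hmeas Q Q.2) _).symm
    _ ≤ ∫⁻ x, μ (closedBall x (2 * γ)) ∂μ := setLIntegral_le_lintegral _ _

lemma measure_closedBall_le_rpow_mul_potential [OpensMeasurableSpace X] {s r : ℝ} (hs : 0 ≤ s)
    (hr : 0 < r) (x : X) :
    μ (closedBall x r) ≤ ENNReal.ofReal r ^ s * potential μ s x := by
  have hr₀ : ENNReal.ofReal r ≠ 0 := by simp [hr]
  have key : ENNReal.ofReal r ^ (-s) * μ (closedBall x r) ≤ potential μ s x :=
    calc ENNReal.ofReal r ^ (-s) * μ (closedBall x r)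
        = ∫⁻ _ in closedBall x r, ENNReal.ofReal r ^ (-s) ∂μ := (setLIntegral_const _ _).symm
      _ ≤ ∫⁻ y in closedBall x r, edist x y ^ (-s) ∂μ := by
          refine setLIntegral_mono' measurableSet_closedBall fun y hy => ?_
          rw [ENNReal.rpow_neg, ENNReal.rpow_neg]
          gcongr
          rw [edist_comm]
          exact (edist_le_ofReal hr.le).2 hy
      _ ≤ potential μ s x := setLIntegral_le_lintegral _ _
  calc μ (closedBall x r)
      = ENNReal.ofReal r ^ s * (ENNReal.ofReal r ^ (-s) * μ (closedBall x r)) := by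
        rw [← mul_assoc, ← ENNReal.rpow_add _ _ hr₀ ENNReal.ofReal_ne_top, add_neg_cancel,
          ENNReal.rpow_zero, one_mul]
    _ ≤ ENNReal.ofReal r ^ s * potential μ s x := by gcongr

lemma lintegral_measure_closedBall_le_rpow_mul_energy [OpensMeasurableSpace X] {s r : ℝ}
    (hs : 0 ≤ s) (hr : 0 < r) :
    ∫⁻ x, μ (closedBall x r) ∂μ ≤ ENNReal.ofReal r ^ s * energy μ s :=
  calc ∫⁻ x, μ (closedBall x r) ∂μ ≤ ∫⁻ x, ENNReal.ofReal r ^ s * potential μ s x ∂μ :=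
        lintegral_mono fun x => measure_closedBall_le_rpow_mul_potential hs hr x
    _ = ENNReal.ofReal r ^ s * energy μ s :=
        lintegral_const_mul' _ _ (ENNReal.rpow_ne_top_of_nonneg hs ENNReal.ofReal_ne_top)

lemma lintegral_measure_closedBall_lt_top [IsFiniteMeasure μ] (r : ℝ) :
    ∫⁻ x, μ (closedBall x r) ∂μ < ⊤ :=
  (lintegral_mono fun x => measure_mono (subset_univ _)).trans_lt
    (by simp [lintegral_const, ENNReal.mul_lt_top])

lemma corrDim_zero : corrDim (0 : Measure X) = 0 := by
  simp [corrDim, energy]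

lemma energy_zero_right : energy μ 0 = μ univ ^ 2 := by
  simp [energy, sq]

lemma corrDim_le_of_forall_energy_lt_top [IsFiniteMeasure μ] {t : ℝ}
    (h : ∀ s, 0 ≤ s → energy μ s < ⊤ → s ≤ t) : corrDim μ ≤ t := by
  have h0 : energy μ 0 < ⊤ := by
    rw [energy_zero_right]
    exact ENNReal.pow_lt_top (measure_lt_top μ univ)
  refine csSup_le ⟨0, h0⟩ fun s hs => ?_
  rcases le_or_gt 0 s with hs0 | hs0
  · exact h s hs0 hs
  · exact hs0.le.trans (h 0 le_rfl h0)

end MetricMeasure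

lemma le_liminf_div_of_le_of_ge {f g L : ℕ → ℝ} {s c a b : ℝ}
    (hL : Tendsto L atTop atBot) (hg : Tendsto (fun n => g n / L n) atTop (𝓝 1))
    (hupper : ∀ᶠ n in atTop, f n ≤ s * g n + c) (hlower : ∀ᶠ n in atTop, a + b * L n ≤ f n) :
    s ≤ liminf (fun n => f n / L n) atTop := by
  have hneg : ∀ᶠ n in atTop, L n < 0 := hL.eventually_lt_atBot 0
  have hlim : Tendsto (fun n => s * (g n / L n) + c / L n) atTop (𝓝 s) := by
    simpa using (hg.const_mul s).add (tendsto_const_nhds.div_atBot hL)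
  have hbdd : IsBoundedUnder (· ≤ ·) atTop (fun n => f n / L n) := by
    refine ⟨b + 1, eventually_map.2 ?_⟩
    filter_upwards [hneg, hlower, (tendsto_const_nhds (x := a)).div_atBot hL |>.eventually_lt_const
      one_pos] with n hn hlow hsmall
    calc f n / L n ≤ (a + b * L n) / L n := div_le_div_of_nonpos_of_le hn.le hlow
      _ = a / L n + b := by rw [add_div, mul_div_cancel_right₀ _ hn.ne]
      _ ≤ b + 1 := by linarith
  calc s = liminf (fun n => s * (g n / L n) + c / L n) atTop := hlim.liminf_eq.symm
    _ ≤ liminf (fun n => f n / L n) atTop := by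
        refine liminf_le_liminf ?_ hlim.isBoundedUnder_ge hbdd.isCoboundedUnder_ge
        filter_upwards [hneg, hupper] with n hn hup
        calc s * (g n / L n) + c / L n = (s * g n + c) / L n := by rw [add_div, mul_div_assoc]
          _ ≤ f n / L n := div_le_div_of_nonpos_of_le hn.le hup

lemma log_toReal_le_of_le_rpow_mul {x I : ℝ≥0∞} {r s : ℝ} (hx : 0 < x.toReal) (hr : 0 < r)
    (hI : I ≠ ⊤) (h : x ≤ ENNReal.ofReal r ^ s * I) :
    Real.log x.toReal ≤ s * Real.log r + Real.log I.toReal := by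
  have h' : x.toReal ≤ r ^ s * I.toReal := by
    simpa [ENNReal.toReal_mul, ← ENNReal.toReal_rpow, hr.le] using
      ENNReal.toReal_mono (by finiteness) h
  have hI₀ : 0 < I.toReal := pos_of_mul_pos_right (hx.trans_le h') (by positivity)
  calc Real.log x.toReal ≤ Real.log (r ^ s * I.toReal) := Real.log_le_log hx h'
    _ = s * Real.log r + Real.log I.toReal := by
        rw [Real.log_mul (by positivity) hI₀.ne', Real.log_rpow hr]

theorem corrDim_general_filtration_upper_general {X : Type*} [MetricSpace X] [CompactSpace X]
    [MeasurableSpace X] [BorelSpace X] (hX : DoublingSpace X)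
    (δ γ : ℕ → ℝ) (Qn : ℕ → Set (Set X))
    (hδpos : ∀ n, 0 < δ n) (hγpos : ∀ n, 0 < γ n)
    (hF1 : ∀ n, δ n ≤ γ n)
    (hF2 : Tendsto γ atTop (𝓝 0))
    (hF4 : Tendsto (fun n => Real.log (γ n) / Real.log (δ n)) atTop (𝓝 1))
    (hdisj : ∀ n, (Qn n).PairwiseDisjoint id)
    (hborel : ∀ n, ∀ Q ∈ Qn n, MeasurableSet Q)
    (hball_in : ∀ n, ∀ Q ∈ Qn n, ∃ x : X, closedBall x (δ n) ⊆ Q)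
    (hball_out : ∀ n, ∀ Q ∈ Qn n, ∃ x : X, Q ⊆ closedBall x (γ n))
    (μ : Measure X) [IsFiniteMeasure μ]
    (hsupp : μ (⋂ n, ⋃₀ Qn n)ᶜ = 0) :
    (∀ n, (∑' Q : Qn n, (μ (Q : Set X)) ^ 2) ≤
        ∫⁻ x, μ (closedBall x (2 * γ n)) ∂μ) ∧
    corrDim μ ≤
      liminf (fun n =>
        Real.log (∑' Q : Qn n, (μ (Q : Set X)) ^ 2).toReal / Real.log (δ n)) atTop := by
  have hA n := tsum_measure_sq_le_lintegral_measure_closedBall (μ := μ) (hdisj n) (hborel n)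
    (hball_out n)
  refine ⟨hA, ?_⟩
  rcases eq_zero_or_neZero μ with rfl | hμ
  · simp [corrDim_zero]
  have hδ : Tendsto δ atTop (𝓝[>] 0) := tendsto_nhdsWithin_of_tendsto_nhds_of_eventually_within _
    (squeeze_zero (fun n => (hδpos n).le) hF1 hF2) (Eventually.of_forall hδpos)
  have hS_top n : ∑' Q : Qn n, μ (Q : Set X) ^ 2 ≠ ⊤ :=
    ((hA n).trans_lt (lintegral_measure_closedBall_lt_top _)).ne
  have hcover n : μ univ ≤ μ (⋃₀ Qn n) := by
    refine measure_mono_ae (ae_le_set.2 (measure_mono_null ?_ hsupp))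
    exact fun x hx hmem => hx.2 (mem_iInter.1 hmem n)
  obtain ⟨C, D, hC, hpack⟩ := hX.exists_ncard_le_rpow_of_pairwiseDisjoint
  have hlower : ∀ᶠ n in atTop, 0 < (∑' Q : Qn n, μ (Q : Set X) ^ 2).toReal ∧
      2 * Real.log ((μ univ).toReal / C) + 2 * D * Real.log (δ n) ≤
        Real.log (∑' Q : Qn n, μ (Q : Set X) ^ 2).toReal := by
    filter_upwards [(tendsto_nhdsWithin_iff.1 hδ).1.eventually_le_const one_pos] with n hn
    obtain ⟨hfin, hcard⟩ := hpack (δ n) (hδpos n) hn (Qn n) (hdisj n) (hball_in n)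
    exact log_tsum_measure_sq_lower_bound hfin (hcover n) (hS_top n) hC (hδpos n) hcard
  refine corrDim_le_of_forall_energy_lt_top fun s hs hI => le_liminf_div_of_le_of_ge
    (c := s * Real.log 2 + Real.log (energy μ s).toReal)
    (Real.tendsto_log_nhdsGT_zero.comp hδ) hF4 ?_ (hlower.mono fun n h => h.2)
  filter_upwards [hlower] with n hn
  have h := log_toReal_le_of_le_rpow_mul hn.1 (mul_pos two_pos (hγpos n)) hI.ne
    ((hA n).trans (lintegral_measure_closedBall_le_rpow_mul_energy hs (mul_pos two_pos (hγpos n))))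
  rw [Real.log_mul two_ne_zero (hγpos n).ne'] at h
  linarith

/-- Upper bound for the correlation dimension via a general filtration, together with
the key integral estimate `∫ μ(B(x, 2γ_n)) dμ(x) ≥ ∑_{Q ∈ Q_n} μ(Q)²`. -/
theorem corrDim_general_filtration_upper {X : Type*} [MetricSpace X] [CompactSpace X]
    [MeasurableSpace X] [BorelSpace X] (hX : DoublingSpace X)
    (δ γ : ℕ → ℝ) (Qn : ℕ → Set (Set X))
    (hδpos : ∀ n, 0 < δ n) (hγpos : ∀ n, 0 < γ n)
    (hδanti : Antitone δ) (hγanti : Antitone γ)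
    (hF1 : ∀ n, δ n ≤ γ n)
    (hF2 : Tendsto γ atTop (𝓝 0))
    (hF3 : Tendsto (fun n => Real.log (δ n) / Real.log (δ (n + 1))) atTop (𝓝 1))
    (hF4 : Tendsto (fun n => Real.log (γ n) / Real.log (δ n)) atTop (𝓝 1))
    (hdisj : ∀ n, (Qn n).PairwiseDisjoint id)
    (hborel : ∀ n, ∀ Q ∈ Qn n, MeasurableSet Q)
    (hball_in : ∀ n, ∀ Q ∈ Qn n, ∃ x : X, closedBall x (δ n) ⊆ Q)
    (hball_out : ∀ n, ∀ Q ∈ Qn n, ∃ x : X, Q ⊆ closedBall x (γ n))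
    (μ : Measure X) [IsFiniteMeasure μ] [μ.Regular]
    (hsupp : μ (⋂ n, ⋃₀ Qn n)ᶜ = 0) :
    (∀ n, (∑' Q : Qn n, (μ (Q : Set X)) ^ 2) ≤
        ∫⁻ x, μ (closedBall x (2 * γ n)) ∂μ) ∧
    corrDim μ ≤
      liminf (fun n =>
        Real.log (∑' Q : Qn n, (μ (Q : Set X)) ^ 2).toReal / Real.log (δ n)) atTop :=
  corrDim_general_filtration_upper_general hX δ γ Qn hδpos hγpos hF1 hF2 hF4 hdisj hborel hball_in
    hball_out μ hsupp
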